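/- arXiv:1512.04260 — 3 statements merged into one kernel-verified Lean document; each statement's English description precedes it below -/
import Mathlib

section
/- Let A be a unital C*-algebra with an algebra F of finite type elements, let (p_α) be an approximate unit of F consisting of projections, and let p ∈ F be a projection. Then for every ε > 0 there exist an index α₀ and a projection p' ∈ A with p' ∼ p, p' ≤ p_{α₀}, and ‖p - p'‖ < ε. -/
/-- A projection in a C*-algebra: a self-adjoint idempotent. -/
def IsProjection {A : Type*} [Ring A] [StarRing A] (p : A) : Prop :=
  star p = p ∧ p * p = p

/-- Murray–von Neumann equivalence: `p ∼ q` iff there is `v` with `v v* = p`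
and `v* v = q`. -/
def MvNEquiv {A : Type*} [Ring A] [StarRing A] (p q : A) : Prop :=
  ∃ v : A, v * star v = p ∧ star v * v = q

/-- `(u α)_{α}` (indexed by the directed set `(ι, rel)`) is an approximate unit
for `F` consisting of projections. -/
structure IsApproxUnit {A : Type*} [NormedRing A] [StarRing A] (F : Set A)
    {ι : Type} (rel : ι → ι → Prop) (u : ι → A) : Prop where
  nonempty : Nonempty ι
  directed : ∀ α β : ι, ∃ γ : ι, rel α γ ∧ rel β γ
  proj : ∀ α, IsProjection (u α)
  mem : ∀ α, u α ∈ F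
  approx : ∀ f ∈ F, ∀ ε : ℝ, 0 < ε → ∃ α, ∀ β, rel α β → ‖f - u β * f‖ < ε

/-- `F` is an algebra of finite type elements: a self-adjoint two-sided ideal
with an approximate unit consisting of projections, satisfying the
orthogonalization property (iii). -/
structure IsFiniteType {A : Type*} [NormedRing A] [StarRing A] (F : Set A) : Prop where
  zero_mem : (0 : A) ∈ F
  add_mem : ∀ a ∈ F, ∀ b ∈ F, a + b ∈ F
  mul_mem_left : ∀ (a : A), ∀ b ∈ F, a * b ∈ F
  mul_mem_right : ∀ (a : A), ∀ b ∈ F, b * a ∈ F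
  star_mem : ∀ a ∈ F, star a ∈ F
  approx_unit : ∃ (ι : Type) (rel : ι → ι → Prop) (u : ι → A), IsApproxUnit F rel u
  orth : ∀ p ∈ F, ∀ q ∈ F, IsProjection p → IsProjection q →
    ∃ v : A, v * star v = q ∧ IsProjection (star v * v + p)

/-- `b` is a `(p,q)`-inverse of `a`. -/
def IsPQInv {A : Type*} [Ring A] (a p q b : A) : Prop :=
  b = (1 - p) * b * (1 - q) ∧ (1 - q) * a * (1 - p) * b = 1 - q ∧
    b * ((1 - q) * a * (1 - p)) = 1 - p

/-- `a` is invertible up to `(p,q)`. -/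
def InvUpTo {A : Type*} [Ring A] (a p q : A) : Prop := ∃ b, IsPQInv a p q b

/-! Let `q` be a member of the approximate unit with `‖p - q p‖` small. Then
`b = p q p + (1 - p)` is a self-adjoint element close to `1` commuting with `p`, so it has an
inverse square root `r` close to `1`, and `v = r p q` is a partial isometry with `v v* = p` and
`v q = v`. Its source projection `v* v = q p r² p q` lies under `q` and is close to `q p q`,
hence to `p`. -/

theorem isProjection_iff_isStarProjection {A : Type*} [Ring A] [StarRing A] {p : A} :
    IsProjection p ↔ IsStarProjection p := by
  rw [isStarProjection_iff', IsProjection, and_comm]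

theorem isStarProjection_star_mul_self {R : Type*} [Semiring R] [StarRing R] {v p : R}
    (hv : v * star v = p) (hpv : p * v = v) : IsStarProjection (star v * v) := by
  refine isStarProjection_iff'.mpr ⟨?_, by rw [star_mul, star_star]⟩
  rw [mul_assoc, ← mul_assoc v, hv, hpv]

section CStarAlgebra

variable {A : Type*} [CStarAlgebra A]

theorem IsStarProjection.norm_mul_le {e : A} (he : IsStarProjection e) (x : A) :
    ‖e * x‖ ≤ ‖x‖ :=
  (_root_.norm_mul_le e x).trans <| mul_le_of_le_one_left (norm_nonneg x) (he.norm_le e)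

theorem abs_sub_one_le_of_mem_spectrum {b : A} (hb : IsSelfAdjoint b) {x : ℝ}
    (hx : x ∈ spectrum ℝ b) : |x - 1| ≤ ‖b - 1‖ := by
  have h := norm_apply_le_norm_cfc (fun y => y - 1) b hx
  rwa [cfc_sub (fun y => y) (fun _ => 1) b, cfc_id' ℝ b, cfc_const_one ℝ b] at h

theorem abs_inv_sub_one_le {x δ : ℝ} (hδ : δ ≤ 1 / 2) (hx : |x - 1| ≤ δ) :
    |x⁻¹ - 1| ≤ 2 * δ := by
  have hx2 : 1 / 2 ≤ x := by linarith [(abs_le.mp hx).1]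
  have hx0 : 0 < x := by linarith
  have hxinv : x⁻¹ ≤ 2 := inv_le_of_inv_le₀ (by norm_num) (by linarith)
  have hsplit : x⁻¹ - 1 = -((x - 1) * x⁻¹) := by field_simp; ring
  rw [hsplit, abs_neg, abs_mul, abs_of_pos (inv_pos.mpr hx0)]
  nlinarith [abs_nonneg (x - 1)]

theorem exists_invSqrt_of_norm_sub_one_le {b : A} (hb : IsSelfAdjoint b) {δ : ℝ}
    (hδ : δ ≤ 1 / 2) (h : ‖b - 1‖ ≤ δ) :
    ∃ r : A, IsSelfAdjoint r ∧ (∀ c, Commute b c → Commute r c) ∧ r * b * r = 1 ∧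
      ‖r * r - 1‖ ≤ 2 * δ := by
  have hspec : ∀ x ∈ spectrum ℝ b, |x - 1| ≤ δ := fun x hx =>
    (abs_sub_one_le_of_mem_spectrum hb hx).trans h
  have hpos : ∀ x ∈ spectrum ℝ b, 0 < x := fun x hx => by
    linarith [(abs_le.mp (hspec x hx)).1]
  set g : ℝ → ℝ := fun x => (√x)⁻¹
  have hg : ContinuousOn g (spectrum ℝ b) :=
    Real.continuous_sqrt.continuousOn.inv₀ fun x hx => (Real.sqrt_pos.mpr (hpos x hx)).ne'
  have hgg : ∀ x ∈ spectrum ℝ b, g x * g x = x⁻¹ := fun x hx => by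
    rw [← mul_inv, Real.mul_self_sqrt (hpos x hx).le]
  refine ⟨cfc g b, cfc_predicate g b, fun c hc => hc.cfc_real g, ?_, ?_⟩
  · calc cfc g b * b * cfc g b = cfc (fun x => g x * x * g x) b := by
          rw [cfc_mul (fun x => g x * x) g b (hg.mul continuousOn_id) hg,
            cfc_mul g (fun x => x) b hg continuousOn_id, cfc_id' ℝ b]
      _ = cfc (fun _ => (1 : ℝ)) b := cfc_congr fun x hx => by
          rw [mul_right_comm, hgg x hx, inv_mul_cancel₀ (hpos x hx).ne']
      _ = 1 := cfc_const_one ℝ b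
  · calc ‖cfc g b * cfc g b - 1‖ = ‖cfc (fun x => g x * g x - 1) b‖ := by
          rw [cfc_sub (fun x => g x * g x) (fun _ => 1) b (hg.mul hg), cfc_mul g g b hg hg,
            cfc_const_one ℝ b]
      _ ≤ 2 * δ := norm_cfc_le (by linarith [h.trans' (norm_nonneg _)]) fun x hx => by
          rw [hgg x hx, Real.norm_eq_abs]
          exact abs_inv_sub_one_le hδ (hspec x hx)

theorem IsStarProjection.norm_sub_mul_mul_lt {p q : A} (hp : IsStarProjection p)
    (hq : IsStarProjection q) {δ : ℝ} (h : ‖p - q * p‖ < δ) :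
    ‖p - q * p * q‖ < 2 * δ := by
  have hstar : ‖p - p * q‖ = ‖p - q * p‖ := by
    rw [← norm_star, star_sub, star_mul, hp.isSelfAdjoint.star_eq, hq.isSelfAdjoint.star_eq]
  calc ‖p - q * p * q‖ = ‖(p - q * p) + q * (p - p * q)‖ := by noncomm_ring
    _ ≤ ‖p - q * p‖ + ‖p - p * q‖ :=
      (norm_add_le _ _).trans (by gcongr; exact hq.norm_mul_le _)
    _ < 2 * δ := by linarith

theorem IsStarProjection.norm_sub_star_mul_self_le {p q r : A} (hp : IsStarProjection p)
    (hq : IsStarProjection q) (hr : IsSelfAdjoint r) :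
    ‖p - star (r * (p * q)) * (r * (p * q))‖ ≤ ‖p - q * p * q‖ + ‖r * r - 1‖ := by
  have hsplit : p - star (r * (p * q)) * (r * (p * q)) =
      (p - q * p * q) - q * (p * ((r * r - 1) * (p * q))) := by
    simp only [star_mul, hr.star_eq, hp.isSelfAdjoint.star_eq, hq.isSelfAdjoint.star_eq]
    calc p - q * p * r * (r * (p * q)) = p - q * (p * (r * r) * p) * q := by noncomm_ring
      _ = p - q * p * q - (q * (p * (r * r) * p) * q - q * (p * p) * q) := by
        rw [hp.isIdempotentElem.eq]; abel
      _ = _ := by noncomm_ring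
  have hpq : ‖p * q‖ ≤ 1 := (hp.norm_mul_le q).trans (hq.norm_le q)
  calc _ ≤ ‖p - q * p * q‖ + ‖(r * r - 1) * (p * q)‖ := by
        rw [hsplit]
        refine (norm_sub_le _ _).trans (add_le_add_right ?_ _)
        exact (hq.norm_mul_le _).trans (hp.norm_mul_le _)
    _ ≤ ‖p - q * p * q‖ + ‖r * r - 1‖ := by
        gcongr
        exact (_root_.norm_mul_le _ _).trans (mul_le_of_le_one_right (norm_nonneg _) hpq)

theorem exists_partialIsometry_of_norm_sub_mul_lt {p q : A} (hp : IsStarProjection p)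
    (hq : IsStarProjection q) {δ : ℝ} (hδ : δ ≤ 1 / 2) (h : ‖p - q * p‖ < δ) :
    ∃ v : A, v * star v = p ∧ p * v = v ∧ v * q = v ∧ ‖p - star v * v‖ < 4 * δ := by
  have hpp := hp.isIdempotentElem.eq
  have hqq := hq.isIdempotentElem.eq
  set b := p * q * p + (1 - p)
  have hpb : p * b = p * q * p := by
    simp only [b, mul_add, mul_sub, ← mul_assoc, hpp]; noncomm_ring
  have hbp : b * p = p * q * p := by
    simp only [b, add_mul, sub_mul, mul_assoc, hpp]; noncomm_ring
  have hb : IsSelfAdjoint b := by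
    simp only [b, IsSelfAdjoint, star_add, star_sub, star_mul, star_one, hp.isSelfAdjoint.star_eq,
      hq.isSelfAdjoint.star_eq, mul_assoc]
  have hb1 : ‖b - 1‖ < δ := by
    have hb_sub : b - 1 = -(p * (p - q * p)) := by simp only [b, mul_sub, ← mul_assoc, hpp]; abel
    rw [hb_sub, norm_neg]
    exact (hp.norm_mul_le _).trans_lt h
  obtain ⟨r, hr, hrc, hrbr, hrr⟩ := exists_invSqrt_of_norm_sub_one_le hb hδ hb1.le
  have hrp : r * p = p * r := hrc p (hbp.trans hpb.symm)
  have hvstar : star (r * (p * q)) = q * p * r := by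
    rw [star_mul, star_mul, hr.star_eq, hp.isSelfAdjoint.star_eq, hq.isSelfAdjoint.star_eq,
      mul_assoc]
  refine ⟨r * (p * q), ?_, ?_, by rw [mul_assoc, mul_assoc, hqq], ?_⟩
  · calc r * (p * q) * star (r * (p * q)) = r * (p * (q * q) * p) * r := by
          rw [hvstar]; noncomm_ring
      _ = r * b * (r * p) := by rw [hqq, ← hbp, hrp]; noncomm_ring
      _ = p := by rw [← mul_assoc, hrbr, one_mul]
  · rw [← mul_assoc, ← hrp, mul_assoc, ← mul_assoc p p, hpp]
  · calc ‖p - star (r * (p * q)) * (r * (p * q))‖ ≤ ‖p - q * p * q‖ + ‖r * r - 1‖ :=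
          hp.norm_sub_star_mul_self_le hq hr
      _ < 2 * δ + 2 * δ := add_lt_add_of_lt_of_le (hp.norm_sub_mul_mul_lt hq h) hrr
      _ = 4 * δ := by ring

end CStarAlgebra

theorem approxUnit_absorbs_projection_general
    {A : Type*} [NormedRing A] [StarRing A] [CStarRing A] [CompleteSpace A]
    [NormedAlgebra ℂ A] [StarModule ℂ A]
    (F : Set A)
    {ι : Type} (rel : ι → ι → Prop) (u : ι → A) (hu : IsApproxUnit F rel u)
    (p : A) (hpF : p ∈ F) (hp : IsProjection p)
    (ε : ℝ) (hε : 0 < ε) :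
    ∃ (α₀ : ι) (p' : A), IsProjection p' ∧ MvNEquiv p p' ∧
      p' * u α₀ = p' ∧ ‖p - p'‖ < ε := by
  let _ : CStarAlgebra A := {}
  set δ := min (ε / 4) (1 / 2)
  obtain ⟨α, hα⟩ := hu.approx p hpF δ (by positivity)
  obtain ⟨α₀, hαα₀, -⟩ := hu.directed α α
  obtain ⟨v, hvp, hpv, hvq, hvnorm⟩ := exists_partialIsometry_of_norm_sub_mul_lt
    (isProjection_iff_isStarProjection.mp hp)
    (isProjection_iff_isStarProjection.mp (hu.proj α₀)) (min_le_right _ _) (hα α₀ hαα₀)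
  refine ⟨α₀, star v * v,
    isProjection_iff_isStarProjection.mpr (isStarProjection_star_mul_self hvp hpv),
    ⟨v, hvp, rfl⟩, by rw [mul_assoc, hvq], hvnorm.trans_le ?_⟩
  linarith [min_le_left (ε / 4) (1 / 2)]

/-- Any projection `p ∈ F` is equivalent to a subprojection of some member of
any approximate unit of projections, with `‖p - p'‖` arbitrarily small. -/
theorem approxUnit_absorbs_projection
    {A : Type*} [NormedRing A] [StarRing A] [CStarRing A] [CompleteSpace A]
    [NormedAlgebra ℂ A] [StarModule ℂ A]
    (F : Set A) (hF : IsFiniteType F)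
    {ι : Type} (rel : ι → ι → Prop) (u : ι → A) (hu : IsApproxUnit F rel u)
    (p : A) (hpF : p ∈ F) (hp : IsProjection p)
    (ε : ℝ) (hε : 0 < ε) :
    ∃ (α₀ : ι) (p' : A), IsProjection p' ∧ MvNEquiv p p' ∧
      p' * u α₀ = p' ∧ ‖p - p'‖ < ε :=
  approxUnit_absorbs_projection_general F rel u hu p hpF hp ε hε
end

section
/- Let A be a unital C*-algebra with an algebra F of finite type elements. For every projection p ∈ F there exists an approximate unit (p_α) of F consisting of projections with p ≤ p_α for all α. -/
/-! If a projection `a` almost contains `p`, i.e. `‖p - a p‖ ≤ 1/2`, let `b` be the inverse of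
`p a p` in the corner `p A p`. Then `m = a + (1 - a) b a` is an idempotent in the ideal generated
by `a` with `m p = p` and `‖m - a‖ ≤ 2 ‖p - a p‖`, and its range projection
`q = m m* (1 + (m - m*)* (m - m*))⁻¹` (Kaplansky) is a projection in `F` with `p ≤ q` and
`‖f - q f‖ ≤ ‖f - a f‖ + 2 ‖p - a p‖ ‖f‖`. Replacing every `u β` of a given approximate unit by
such a `q` gives the required approximate unit. Since the index relation need not be transitive,
the tails on which `u β` approximates `f` and `p` are obtained at once by approximating
`f f* + p p*`, which dominates both `f f*` and `p p*`. -/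

theorem IsProjection.isStarProjection {A : Type*} [Ring A] [StarRing A] {p : A}
    (hp : IsProjection p) : IsStarProjection p :=
  ⟨hp.2, hp.1⟩

section Ring

variable {A : Type*} [Ring A] [StarRing A]

theorem exists_range_projection_of_isIdempotentElem {m : A} (hm : IsIdempotentElem m)
    (hN : IsUnit (1 + star (m - star m) * (m - star m))) :
    ∃ x, IsProjection (m * x) ∧ m * x * m = m := by
  obtain ⟨⟨N, n, hNn, hnN⟩, hN⟩ := hN
  change N = _ at hN
  have hmm : m * m = m := hm
  have hss : star m * star m = star m := by rw [← star_mul, hmm]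
  have hN_eq : N = 1 - m - star m + m * star m + star m * m := by
    rw [hN]; simp only [star_sub, star_star, sub_mul, mul_sub, hmm, hss]; abel
  have hmN : m * N = m * star m * m := by
    rw [hN_eq]; simp only [mul_add, mul_sub, mul_one, ← mul_assoc, hmm]; abel
  have hNm : N * m = m * star m * m := by
    rw [hN_eq]; simp only [add_mul, sub_mul, one_mul, mul_assoc, hmm]; abel
  have hn_star : star n = n := by
    have hNs : star N = N := by
      rw [hN_eq]; simp only [star_add, star_sub, star_mul, star_star, star_one]; abel
    calc star n = star n * (N * n) := by rw [hNn, mul_one]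
      _ = star (star N * n) * n := by rw [star_mul, star_star, mul_assoc]
      _ = n := by rw [hNs, hNn, star_one, one_mul]
  have hn_m : n * m = m * n := by
    calc n * m = n * (m * N) * n := by rw [mul_assoc, mul_assoc, hNn, mul_one]
      _ = n * N * m * n := by rw [hmN, ← hNm]; simp only [mul_assoc]
      _ = m * n := by rw [hnN, one_mul]
  have hn_sm : n * star m = star m * n := by
    simpa only [star_mul, hn_star] using congrArg star hn_m.symm
  have hqm : m * (star m * n) * m = m := by
    rw [mul_assoc, mul_assoc, hn_m, ← mul_assoc, ← mul_assoc, ← hmN, mul_assoc, hNn, mul_one]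
  refine ⟨star m * n, ⟨?_, ?_⟩, hqm⟩
  · rw [star_mul, star_mul, star_star, hn_star, ← mul_assoc, hn_m, mul_assoc, hn_sm, mul_assoc]
  · conv_lhs => rw [← mul_assoc, hqm]

end Ring

theorem isIdempotentElem_add_one_sub_mul_mul {A : Type*} [Ring A] {a : A}
    (ha : IsIdempotentElem a) (b : A) : IsIdempotentElem (a + (1 - a) * b * a) := by
  have haa : a * a = a := ha
  have h : a * (1 - a) = 0 := by rw [mul_sub, mul_one, haa, sub_self]
  unfold IsIdempotentElem
  calc (a + (1 - a) * b * a) * (a + (1 - a) * b * a)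
      = a * a + (1 - a) * b * (a * a) + a * (1 - a) * b * a
        + (1 - a) * b * (a * (1 - a)) * b * a := by noncomm_ring
    _ = a + (1 - a) * b * a := by rw [haa, h]; noncomm_ring

section CStarAlgebra

variable {A : Type*} [CStarAlgebra A]

theorem IsProjection.norm_le_one {p : A} (hp : IsProjection p) : ‖p‖ ≤ 1 :=
  hp.isStarProjection.norm_le

theorem norm_sub_mul_le_of_mul_eq {q m : A} (hq : IsProjection q) (hqm : q * m = m) (a f : A) :
    ‖f - q * f‖ ≤ ‖f - a * f‖ + ‖m - a‖ * ‖f‖ := by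
  have h1q : ‖1 - q‖ ≤ 1 := hq.isStarProjection.one_sub.norm_le
  have e : f - q * f = (1 - q) * ((f - a * f) - (m - a) * f) := by
    simp only [mul_sub, sub_mul, one_mul, ← mul_assoc, hqm]; abel
  calc ‖f - q * f‖ ≤ ‖1 - q‖ * ‖(f - a * f) - (m - a) * f‖ := e ▸ norm_mul_le _ _
    _ ≤ 1 * (‖f - a * f‖ + ‖m - a‖ * ‖f‖) := by
      gcongr
      exact (norm_sub_le _ _).trans (by gcongr; exact norm_mul_le _ _)
    _ = ‖f - a * f‖ + ‖m - a‖ * ‖f‖ := one_mul _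

theorem exists_corner_inverse {p a : A} (hp : IsProjection p) (h : ‖p - a * p‖ ≤ 1 / 2) :
    ∃ b, p * b = b ∧ b * a * p = p ∧ ‖b‖ ≤ 2 := by
  have hpp : p * p = p := hp.2
  set t := p * (p - a * p)
  have ht : ‖t‖ ≤ 1 / 2 :=
    (norm_mul_le _ _).trans <| by nlinarith [hp.norm_le_one, norm_nonneg (p - a * p)]
  obtain ⟨⟨c, c', _, hc'c⟩, hc⟩ := isUnit_one_sub_of_norm_lt_one (ht.trans_lt (by norm_num))
  change c = 1 - t at hc
  have hcp : c * p = p * a * p := by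
    rw [hc]; simp only [t, sub_mul, mul_sub, one_mul, mul_assoc, hpp]; noncomm_ring
  have hpc : p * c = p * a * p := by
    rw [hc]; simp only [t, mul_sub, mul_one, ← mul_assoc, hpp]; noncomm_ring
  set b := p * c' * p
  have hbc : b * c = p := by
    rw [mul_assoc, hpc, ← hcp, ← mul_assoc, mul_assoc p, hc'c, mul_one, hpp]
  refine ⟨b, by rw [← mul_assoc, ← mul_assoc, hpp], ?_, ?_⟩
  · have hbp : b * p = b := by simp only [b, mul_assoc, hpp]
    calc b * a * p = b * p * a * p := by rw [hbp]
      _ = b * (c * p) := by rw [hcp]; simp only [mul_assoc]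
      _ = p := by rw [← mul_assoc, hbc, hpp]
  · have e : b = p + b * t := by
      calc b = b * (c + t) := by rw [hc, sub_add_cancel, mul_one]
        _ = p + b * t := by rw [mul_add, hbc]
    have hb : ‖b‖ ≤ 1 + ‖b‖ * (1 / 2) := by
      calc ‖b‖ = ‖p + b * t‖ := congrArg norm e
        _ ≤ ‖p‖ + ‖b * t‖ := norm_add_le _ _
        _ ≤ 1 + ‖b‖ * (1 / 2) := by
          gcongr
          · exact hp.norm_le_one
          · exact (norm_mul_le _ _).trans (by gcongr)
    linarith

end CStarAlgebra

section StarOrderedCStarAlgebra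

variable {A : Type*} [CStarAlgebra A] [PartialOrder A] [StarOrderedRing A]

theorem isUnit_one_add_star_mul_self (d : A) : IsUnit (1 + star d * d) :=
  CStarAlgebra.isUnit_of_le 1 (le_add_of_nonneg_right (star_mul_self_nonneg d))

theorem exists_isProjection_dominating {p a : A} (hp : IsProjection p) (ha : IsProjection a)
    (h : ‖p - a * p‖ ≤ 1 / 2) :
    ∃ x y : A, IsProjection (x * a * y) ∧ p * (x * a * y) = p ∧
      ∀ f, ‖f - x * a * y * f‖ ≤ ‖f - a * f‖ + 2 * ‖p - a * p‖ * ‖f‖ := by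
  obtain ⟨b, hpb, hbap, hb⟩ := exists_corner_inverse hp h
  obtain ⟨m, hm_def⟩ : ∃ m, m = (1 + (1 - a) * b) * a := ⟨_, rfl⟩
  have hm : IsIdempotentElem m := by
    simpa only [hm_def, add_mul, one_mul] using
      isIdempotentElem_add_one_sub_mul_mul ha.isStarProjection.isIdempotentElem b
  have hmp : m * p = p := by
    rw [hm_def, mul_assoc, add_mul, mul_assoc, ← mul_assoc b, hbap]; noncomm_ring
  have hma : ‖m - a‖ ≤ 2 * ‖p - a * p‖ := by
    have e : m - a = (p - a * p) * b * a :=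
      calc m - a = (1 - a) * (p * b) * a := by rw [hm_def, hpb]; noncomm_ring
        _ = (p - a * p) * b * a := by noncomm_ring
    rw [e]
    calc ‖(p - a * p) * b * a‖ ≤ ‖p - a * p‖ * ‖b‖ * ‖a‖ := norm_mul₃_le
      _ ≤ ‖p - a * p‖ * 2 * 1 := by gcongr; exact ha.norm_le_one
      _ = 2 * ‖p - a * p‖ := by ring
  obtain ⟨x, hq, hqm⟩ := exists_range_projection_of_isIdempotentElem hm
    (isUnit_one_add_star_mul_self _)
  have hqp : m * x * p = p :=
    calc m * x * p = m * x * (m * p) := by rw [hmp]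
      _ = p := by rw [← mul_assoc, hqm, hmp]
  have hpq : p * (m * x) = p := by
    simpa only [star_mul, hp.1, hq.1] using congrArg star hqp
  subst hm_def
  refine ⟨1 + (1 - a) * b, x, hq, hpq, fun f => ?_⟩
  calc ‖f - (1 + (1 - a) * b) * a * x * f‖
      ≤ ‖f - a * f‖ + ‖(1 + (1 - a) * b) * a - a‖ * ‖f‖ := norm_sub_mul_le_of_mul_eq hq hqm a f
    _ ≤ ‖f - a * f‖ + 2 * ‖p - a * p‖ * ‖f‖ := by gcongr

theorem sq_norm_sub_mul_le_of_mul_star_le {e g h : A} (he : IsProjection e)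
    (hgh : g * star g ≤ h) : ‖g - e * g‖ ^ 2 ≤ ‖h - e * h‖ := by
  have hsa : IsSelfAdjoint (1 - e) := he.isStarProjection.one_sub.isSelfAdjoint
  calc ‖g - e * g‖ ^ 2 = ‖(1 - e) * (g * star g) * (1 - e)‖ := by
        rw [sq, ← one_sub_mul, ← CStarRing.norm_self_mul_star, star_mul, hsa.star_eq]
        simp only [mul_assoc]
    _ ≤ ‖(1 - e) * h * (1 - e)‖ :=
        CStarAlgebra.norm_le_norm_of_nonneg_of_le (hsa.conjugate_nonneg (mul_star_self_nonneg g))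
          (hsa.conjugate_le_conjugate hgh)
    _ ≤ ‖(1 - e) * h‖ * ‖1 - e‖ := norm_mul_le _ _
    _ ≤ ‖h - e * h‖ := by
        rw [sub_mul, one_mul]
        exact mul_le_of_le_one_right (norm_nonneg _) he.isStarProjection.one_sub.norm_le

theorem IsApproxUnit.exists_forall_norm_sub_mul_lt {F : Set A} {ι : Type} {rel : ι → ι → Prop}
    {u : ι → A} (hu : IsApproxUnit F rel u) {f g : A} (hfg : f * star f + g * star g ∈ F) {δ : ℝ}
    (hδ : 0 < δ) : ∃ α, ∀ β, rel α β → ‖f - u β * f‖ < δ ∧ ‖g - u β * g‖ < δ := by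
  obtain ⟨α, hα⟩ := hu.approx _ hfg (δ ^ 2) (by positivity)
  have hsmall {h : A} (hh : h * star h ≤ f * star f + g * star g) (β : ι) (hβ : rel α β) :
      ‖h - u β * h‖ < δ :=
    lt_of_pow_lt_pow_left₀ 2 hδ.le <|
      (sq_norm_sub_mul_le_of_mul_star_le (hu.proj β) hh).trans_lt (hα β hβ)
  exact ⟨α, fun β hβ => ⟨hsmall (le_add_of_nonneg_right (mul_star_self_nonneg g)) β hβ,
    hsmall (le_add_of_nonneg_left (mul_star_self_nonneg f)) β hβ⟩⟩

theorem IsFiniteType.exists_isProjection_mem_dominating {F : Set A} (hF : IsFiniteType F)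
    {p a : A} (hp : IsProjection p) (hpF : p ∈ F) (ha : IsProjection a) (haF : a ∈ F) :
    ∃ q, IsProjection q ∧ q ∈ F ∧ p * q = p ∧
      (‖p - a * p‖ ≤ 1 / 2 → ∀ f, ‖f - q * f‖ ≤ ‖f - a * f‖ + 2 * ‖p - a * p‖ * ‖f‖) := by
  by_cases h : ‖p - a * p‖ ≤ 1 / 2
  · obtain ⟨x, y, hq, hpq, hest⟩ := exists_isProjection_dominating hp ha h
    exact ⟨_, hq, hF.mul_mem_right y _ (hF.mul_mem_left x a haF), hpq, fun _ => hest⟩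
  · exact ⟨p, hp, hpF, hp.2, fun h' => absurd h' h⟩

end StarOrderedCStarAlgebra

/-- For every projection `p ∈ F` there is an approximate unit `(u α)` of `F`
consisting of projections with `p ≤ u α` for all `α`. -/
theorem exists_approxUnit_dominating
    {A : Type*} [NormedRing A] [StarRing A] [CStarRing A] [CompleteSpace A]
    [NormedAlgebra ℂ A] [StarModule ℂ A]
    (F : Set A) (hF : IsFiniteType F)
    (p : A) (hpF : p ∈ F) (hp : IsProjection p) :
    ∃ (ι : Type) (rel : ι → ι → Prop) (u : ι → A),
      IsApproxUnit F rel u ∧ ∀ α, p * u α = p := by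
  let _ : CStarAlgebra A := ⟨⟩
  let _ : PartialOrder A := CStarAlgebra.spectralOrder A
  let _ : StarOrderedRing A := CStarAlgebra.spectralOrderedRing A
  obtain ⟨ι, rel, u, hu⟩ := hF.approx_unit
  choose v hv hvF hpv hest using
    fun β => hF.exists_isProjection_mem_dominating hp hpF (hu.proj β) (hu.mem β)
  refine ⟨ι, rel, v, ⟨hu.nonempty, hu.directed, hv, hvF, fun f hf ε hε => ?_⟩, hpv⟩
  set δ := min (1 / 2) (ε / 2 / (1 + 2 * ‖f‖))
  have hδ : 0 < δ := lt_min (by norm_num) (by positivity)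
  have hδε : δ * (1 + 2 * ‖f‖) ≤ ε / 2 := (le_div_iff₀ (by positivity)).mp (min_le_right _ _)
  obtain ⟨α, hα⟩ := hu.exists_forall_norm_sub_mul_lt
    (hF.add_mem _ (hF.mul_mem_right _ f hf) _ (hF.mul_mem_right _ p hpF)) hδ
  refine ⟨α, fun β hβ => ?_⟩
  obtain ⟨hfβ, hpβ⟩ := hα β hβ
  calc ‖f - v β * f‖ ≤ ‖f - u β * f‖ + 2 * ‖p - u β * p‖ * ‖f‖ :=
        hest β (hpβ.le.trans (min_le_left _ _)) f
    _ ≤ δ * (1 + 2 * ‖f‖) := by nlinarith [norm_nonneg f]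
    _ < ε := by linarith
end

section
/- Let A be a unital C*-algebra with finite type elements F. If a ∈ A is invertible modulo F (i.e., there exist b₁, b₂ ∈ A with a b₁ - 1 ∈ F and b₂ a - 1 ∈ F), then a is of Fredholm type: there exist projections p, r ∈ F such that a is invertible up to (p,r). -/
lemma aux_isUnit_one_add_star_mul_self {A : Type*} [CStarAlgebra A] (v : A) :
    IsUnit (1 + star v * v) := by
  by_contra hu
  have hmem : (-1 : ℝ) ∈ spectrum ℝ (star v * v) := by
    rw [spectrum.mem_iff]
    intro h1
    apply hu
    have he : algebraMap ℝ A (-1) - star v * v = -(1 + star v * v) := by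
      rw [map_neg, map_one]; abel
    rw [he] at h1
    exact (IsUnit.neg_iff _).mp h1
  linarith [spectrum_star_mul_self_nonneg (-1) hmem]

/-- Atkinson, converse direction: if `a` is invertible modulo `F`, then `a` is
of Fredholm type: it is invertible up to a pair of projections in `F`. -/
theorem invertible_mod_F_is_fredholm
    {A : Type*} [NormedRing A] [StarRing A] [CStarRing A] [CompleteSpace A]
    [NormedAlgebra ℂ A] [StarModule ℂ A]
    (F : Set A) (hF : IsFiniteType F) (a : A)
    (h : ∃ b₁ b₂ : A, a * b₁ - 1 ∈ F ∧ b₂ * a - 1 ∈ F) :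
    ∃ p r : A, p ∈ F ∧ r ∈ F ∧ IsProjection p ∧ IsProjection r ∧
      InvUpTo a p r := by
  letI : CStarAlgebra A := { }
  obtain ⟨b₁, b₂, hf₁, hf₂⟩ := h
  -- closure facts
  have hsub : ∀ x ∈ F, ∀ y ∈ F, x - y ∈ F := by
    intro x hx y hy
    have hy' : (-1 : A) * y ∈ F := hF.mul_mem_left (-1) y hy
    have := hF.add_mem x hx _ hy'
    simpa [neg_one_mul, sub_eq_add_neg] using this
  -- a * b₂ - 1 ∈ F
  have hab₂ : a * b₂ - 1 ∈ F := by
    have m1 : (b₂ * a - 1) * b₁ ∈ F := hF.mul_mem_right b₁ _ hf₂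
    have m2 : b₂ * (a * b₁ - 1) ∈ F := hF.mul_mem_left b₂ _ hf₁
    have m3 : a * ((b₂ * a - 1) * b₁ - b₂ * (a * b₁ - 1)) ∈ F :=
      hF.mul_mem_left a _ (hsub _ m1 _ m2)
    have m4 := hF.add_mem _ m3 _ hf₁
    have heq : a * ((b₂ * a - 1) * b₁ - b₂ * (a * b₁ - 1)) + (a * b₁ - 1) = a * b₂ - 1 := by
      noncomm_ring
    rwa [heq] at m4
  -- choose the projection p from the approximate unit
  set f₂ := b₂ * a - 1 with hf₂def
  obtain ⟨ι, rel, u, hu⟩ := hF.approx_unit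
  obtain ⟨α, hα⟩ := hu.approx f₂ hf₂ 1 one_pos
  obtain ⟨β, hβ, -⟩ := hu.directed α α
  set p := u β with hpdef
  have hpF : p ∈ F := hu.mem β
  obtain ⟨hpstar, hpidem⟩ := hu.proj β
  have hpnorm : ‖f₂ - p * f₂‖ < 1 := hα β hβ
  set s := (1 : A) - p with hsdef
  have hss : s * s = s := by
    have h0 : ((1 : A) - p) * (1 - p) = 1 - p - (p - p * p) := by noncomm_ring
    rw [hsdef, h0, hpidem]; abel
  have hsstar : star s = s := by rw [hsdef, star_sub, star_one, hpstar]
  have hsnorm : ‖s‖ ≤ 1 := by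
    have h1 : star s * s = s := by rw [hsstar, hss]
    have h2 : ‖s‖ * ‖s‖ = ‖s‖ := by rw [← CStarRing.norm_star_mul_self, h1]
    nlinarith [norm_nonneg s]
  have hps : p * s = 0 := by
    rw [hsdef, mul_sub, mul_one, hpidem, sub_self]
  have hsp : s * p = 0 := by
    rw [hsdef, sub_mul, one_mul, hpidem, sub_self]
  -- the small perturbation z
  set z := s * f₂ * s with hzdef
  have hzF : z ∈ F := hF.mul_mem_right s _ (hF.mul_mem_left s _ hf₂)
  have hsf : s * f₂ = f₂ - p * f₂ := by rw [hsdef]; noncomm_ring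
  have hznorm : ‖z‖ < 1 := by
    calc ‖z‖ ≤ ‖s * f₂‖ * ‖s‖ := norm_mul_le _ _
      _ ≤ ‖s * f₂‖ * 1 := mul_le_mul_of_nonneg_left hsnorm (norm_nonneg _)
      _ = ‖s * f₂‖ := mul_one _
      _ < 1 := by rw [hsf]; exact hpnorm
  have hzs : z * s = z := by rw [hzdef, mul_assoc, hss]
  have hpz : p * z = 0 := by
    rw [hzdef, ← mul_assoc, ← mul_assoc, hps, zero_mul, zero_mul]
  have hzp : z * p = 0 := by rw [hzdef, mul_assoc, hsp, mul_zero]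
  -- the inverse w of 1 + z
  have hzunit : IsUnit (1 + z) := by
    have h0 : ‖-z‖ < 1 := by simpa using hznorm
    have h1 := (Units.oneSub (-z) h0).isUnit
    simpa [Units.val_oneSub, sub_neg_eq_add] using h1
  obtain ⟨W, hW⟩ := hzunit
  set w := ((W⁻¹ : Aˣ) : A) with hwdef
  have hw1 : w * (1 + z) = 1 := by rw [hwdef, ← hW]; exact W.inv_mul
  have hw2 : (1 + z) * w = 1 := by rw [hwdef, ← hW]; exact W.mul_inv
  have hpw : p * w = p := by
    have h1 : p * (1 + z) = p := by rw [mul_add, mul_one, hpz, add_zero]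
    calc p * w = (p * (1 + z)) * w := by rw [h1]
      _ = p * ((1 + z) * w) := by rw [mul_assoc]
      _ = p := by rw [hw2, mul_one]
  have hwp : w * p = p := by
    have h1 : (1 + z) * p = p := by rw [add_mul, one_mul, hzp, add_zero]
    calc w * p = w * ((1 + z) * p) := by rw [h1]
      _ = (w * (1 + z)) * p := by rw [← mul_assoc]
      _ = p := by rw [hw1, one_mul]
  have h1w : (1 : A) - w = w * z := by
    have h' : w * (1 + z) = w + w * z := by rw [mul_add, mul_one]
    have hw1' := hw1
    rw [h'] at hw1'
    rw [← hw1']; abel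
  -- the left inverse l of a * s
  set l := (w - p) * b₂ with hldef
  have hsw : s * (w - p) = w - p := by
    have h0 : ((1 : A) - p) * (w - p) = w - p - (p * w - p * p) := by noncomm_ring
    rw [hsdef, h0, hpw, hpidem]; abel
  have hws : w * s = w - p := by rw [hsdef, mul_sub, mul_one, hwp]
  have hsl : s * l = l := by rw [hldef, ← mul_assoc, hsw]
  have hba : b₂ * a = 1 + f₂ := by rw [hf₂def]; abel
  have hla : l * (a * s) = s := by
    have e1 : l * (a * s) = (w - p) * (b₂ * a) * s := by
      rw [hldef]; noncomm_ring
    have e2 : s * (1 + f₂) * s = s + z := by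
      have h0 : s * (1 + f₂) * s = s * s + s * f₂ * s := by noncomm_ring
      rw [h0, hss, ← hzdef]
    have e3 : (1 + z) * s = s + z := by rw [add_mul, one_mul, hzs]
    calc l * (a * s) = (w - p) * (b₂ * a) * s := e1
      _ = (w * s) * (1 + f₂) * s := by rw [hba, hws]
      _ = w * (s * (1 + f₂) * s) := by rw [mul_assoc, mul_assoc, mul_assoc]
      _ = w * ((1 + z) * s) := by rw [e2, e3]
      _ = (w * (1 + z)) * s := by rw [← mul_assoc]
      _ = s := by rw [hw1, one_mul]
  -- the idempotent e
  set e := a * s * l with hedef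
  have he2 : e * e = e := by
    calc e * e = a * s * (l * (a * s)) * l := by rw [hedef]; noncomm_ring
      _ = a * (s * s) * l := by rw [hla]; noncomm_ring
      _ = e := by rw [hss, hedef]
  have heas : e * (a * s) = a * s := by
    calc e * (a * s) = a * s * (l * (a * s)) := by rw [hedef]; noncomm_ring
      _ = a * (s * s) := by rw [hla]; noncomm_ring
      _ = a * s := by rw [hss]
  have hge : (1 : A) - e ∈ F := by
    have hewp : e = a * ((w - p) * b₂) := by
      have h0 : a * s * ((w - p) * b₂) = a * ((s * (w - p)) * b₂) := by noncomm_ring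
      rw [hedef, hldef, h0, hsw]
    have m1 : w * z + p ∈ F := hF.add_mem _ (hF.mul_mem_left w z hzF) p hpF
    have m2 : a * ((w * z + p) * b₂) ∈ F := hF.mul_mem_left a _ (hF.mul_mem_right b₂ _ m1)
    have m3 : a * ((w * z + p) * b₂) - (a * b₂ - 1) ∈ F := hsub _ m2 _ hab₂
    have heq : a * ((w * z + p) * b₂) - (a * b₂ - 1) = 1 - e := by
      rw [hewp, ← h1w]; noncomm_ring
    rwa [heq] at m3
  -- the symmetrization t and its inverse k
  set t := 1 - e - star e + e * star e + star e * e with htdef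
  have htstar : star t = t := by
    rw [htdef]
    simp only [star_add, star_sub, star_one, star_mul, star_star]
    abel
  have hsese : star e * star e = star e := by rw [← star_mul, he2]
  have hte : e * t = e * star e * e := by
    have e1 : e * t = e - e * e - e * star e + e * e * star e + e * star e * e := by
      rw [htdef]; noncomm_ring
    rw [e1, he2]; abel
  have het : t * e = e * star e * e := by
    have e1 : t * e = e - e * e - star e * e + e * star e * e + star e * (e * e) := by
      rw [htdef]; noncomm_ring
    rw [e1, he2]; abel
  have htse : star e * t = star e * e * star e := by
    have e1 : star e * t = star e - star e * e - star e * star e + star e * e * star e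
        + star e * star e * e := by rw [htdef]; noncomm_ring
    rw [e1, hsese]; abel
  have hets : t * star e = star e * e * star e := by
    have e1 : t * star e = star e - e * star e - star e * star e + e * (star e * star e)
        + star e * e * star e := by rw [htdef]; noncomm_ring
    rw [e1, hsese]; abel
  have htunit : IsUnit t := by
    have hv : t = 1 + star (e - star e) * (e - star e) := by
      have e1 : 1 + star (e - star e) * (e - star e)
          = 1 + star e * e - star e * star e - e * e + e * star e := by
        simp only [star_sub, star_star]; noncomm_ring
      rw [e1, he2, hsese, htdef]; abel
    rw [hv]
    exact aux_isUnit_one_add_star_mul_self (e - star e)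
  obtain ⟨T, hT⟩ := htunit
  set k := ((T⁻¹ : Aˣ) : A) with hkdef
  have hk1 : k * t = 1 := by rw [hkdef, ← hT]; exact T.inv_mul
  have hk2 : t * k = 1 := by rw [hkdef, ← hT]; exact T.mul_inv
  have hke : k * e = e * k := by
    calc k * e = k * e * (t * k) := by rw [hk2, mul_one]
      _ = k * (e * t) * k := by noncomm_ring
      _ = k * (t * e) * k := by rw [hte, het]
      _ = (k * t) * (e * k) := by noncomm_ring
      _ = e * k := by rw [hk1, one_mul]
  have hkes : k * star e = star e * k := by
    calc k * star e = k * star e * (t * k) := by rw [hk2, mul_one]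
      _ = k * (star e * t) * k := by noncomm_ring
      _ = k * (t * star e) * k := by rw [htse, hets]
      _ = (k * t) * (star e * k) := by noncomm_ring
      _ = star e * k := by rw [hk1, one_mul]
  have hkstar : star k = k := by
    have h1 : star k * t = 1 := by
      have h2 := congrArg star hk2
      rw [star_mul, star_one, htstar] at h2
      exact h2
    calc star k = star k * (t * k) := by rw [hk2, mul_one]
      _ = (star k * t) * k := by rw [← mul_assoc]
      _ = k := by rw [h1, one_mul]
  -- the projection q and the remainder r
  set q := e * star e * k with hqdef
  have hqe : q * e = e := by
    calc q * e = e * star e * (k * e) := by rw [hqdef, mul_assoc (e * star e) k e]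
      _ = e * star e * (e * k) := by rw [hke]
      _ = (e * star e * e) * k := by noncomm_ring
      _ = (e * t) * k := by rw [hte]
      _ = e * (t * k) := by rw [mul_assoc]
      _ = e := by rw [hk2, mul_one]
  have heq2 : e * q = q := by
    calc e * q = (e * e) * star e * k := by rw [hqdef]; noncomm_ring
      _ = q := by rw [he2, hqdef]
  have hqq : q * q = q := by
    calc q * q = q * (e * q) := by rw [heq2]
      _ = (q * e) * q := by rw [← mul_assoc]
      _ = e * q := by rw [hqe]
      _ = q := heq2
  have hqstar : star q = q := by
    calc star q = star k * (star (star e) * star e) := by rw [hqdef, star_mul, star_mul]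
      _ = k * (e * star e) := by rw [star_star, hkstar]
      _ = (k * e) * star e := by rw [← mul_assoc]
      _ = (e * k) * star e := by rw [hke]
      _ = e * (k * star e) := by rw [mul_assoc]
      _ = e * (star e * k) := by rw [hkes]
      _ = q := by rw [hqdef, mul_assoc e (star e) k]
  have hqas : q * (a * s) = a * s := by
    calc q * (a * s) = q * (e * (a * s)) := by rw [heas]
      _ = (q * e) * (a * s) := by rw [← mul_assoc]
      _ = e * (a * s) := by rw [hqe]
      _ = a * s := heas
  set r := (1 : A) - q with hrdef
  have hrF : r ∈ F := by
    have m2 : star e * (1 - e) ∈ F := hF.mul_mem_left _ _ hge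
    have m3 : ((1 : A) - e) - star e * (1 - e) ∈ F := hsub _ hge _ m2
    have m4 : (((1 : A) - e) - star e * (1 - e)) * k ∈ F := hF.mul_mem_right k _ m3
    have heq : (((1 : A) - e) - star e * (1 - e)) * k = r := by
      have e1 : (((1 : A) - e) - star e * (1 - e)) * k = t * k - e * star e * k := by
        rw [htdef]; noncomm_ring
      rw [e1, hk2, ← hqdef, hrdef]
    rwa [heq] at m4
  have hrproj : IsProjection r := by
    constructor
    · rw [hrdef, star_sub, star_one, hqstar]
    · have e1 : ((1 : A) - q) * (1 - q) = 1 - q - (q - q * q) := by noncomm_ring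
      rw [hrdef, e1, hqq]; abel
  have h1r : (1 : A) - r = q := by rw [hrdef]; abel
  refine ⟨p, r, hpF, hrF, ⟨hpstar, hpidem⟩, hrproj, ?_⟩
  show ∃ b, IsPQInv a p r b
  refine ⟨l * q, ?_, ?_, ?_⟩
  · rw [← hsdef, h1r]
    calc l * q = (s * l) * (q * q) := by rw [hsl, hqq]
      _ = s * (l * q) * q := by noncomm_ring
  · rw [← hsdef, h1r]
    calc q * a * s * (l * q) = (q * (a * s)) * (l * q) := by noncomm_ring
      _ = (a * s) * (l * q) := by rw [hqas]
      _ = (a * s * l) * q := by noncomm_ring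
      _ = e * q := by rw [hedef]
      _ = q := heq2
  · rw [← hsdef, h1r]
    calc (l * q) * (q * a * s) = l * ((q * q) * (a * s)) := by noncomm_ring
      _ = l * (q * (a * s)) := by rw [hqq]
      _ = l * (a * s) := by rw [hqas]
      _ = s := hla
end
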